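/- Let X ⊆ ℝⁿ be a polyhedral set and ψ(x) = max_{1≤i≤k₁} ψ₁ᵢ(x) − max_{1≤j≤k₂} ψ₂ⱼ(x), where each ψ₁ᵢ is a concave quadratic function, each ψ₂ⱼ is a strictly convex quadratic function, and at every d-stationary point x̄ ∈ D_{(ψ,X)} the gradients { ∇ψ₁ᵢ(x̄) : i ∈ argmax_{1≤i≤k₁} ψ₁ᵢ(x̄) } are linearly independent. Then the set D_{(ψ,X)} of d-stationary points of ψ on X is finite. -/

import Mathlib

open Matrix Filter Topology

noncomputable def finMax {k : ℕ} (hk : 0 < k) (g : Fin k → ℝ) : ℝ :=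
  Finset.univ.sup' (Finset.univ_nonempty_iff.mpr ⟨⟨0, hk⟩⟩) g

/-- The one-sided directional derivative of `ψ` at `x` in direction `v` equals `L`. -/
def HasDirDeriv {n : ℕ} (ψ : (Fin n → ℝ) → ℝ) (x v : Fin n → ℝ) (L : ℝ) : Prop :=
  Filter.Tendsto (fun δ : ℝ => (ψ (x + δ • v) - ψ x) / δ) (nhdsWithin 0 (Set.Ioi 0)) (nhds L)

/-- `x₀` is a d(irectional)-stationary point of `ψ` on `X`. -/
def DStat {n : ℕ} (ψ : (Fin n → ℝ) → ℝ) (X : Set (Fin n → ℝ)) (x₀ : Fin n → ℝ) : Prop :=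
  x₀ ∈ X ∧ ∀ x ∈ X, ∃ L, HasDirDeriv ψ x₀ (x - x₀) L ∧ 0 ≤ L


/-- A polyhedral subset of ℝⁿ: solution set of finitely many linear inequalities. -/
def IsPolyhedral {n : ℕ} (X : Set (Fin n → ℝ)) : Prop :=
  ∃ (m : ℕ) (A : Fin m → Fin n → ℝ) (b : Fin m → ℝ), X = {x | ∀ i, A i ⬝ᵥ x ≤ b i}


/-
A d-stationary point is determined by the pieces of the two maxima active at it and the
constraints of `X` tight at it; there are finitely many such data. Indeed, let `x ≠ y` be
d-stationary points sharing these data and put `d = y - x`. Then `x - εd` and `y + εd` are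
feasible for small `ε > 0`, so stationarity at `x` and at `y` yields active pieces `ψ₁ᵢ`, `ψ₁ᵢ'`
and an active `ψ₂ⱼ` with `∇ψ₁ᵢ(x)·d ≤ ∇ψ₂ⱼ(x)·d` and `∇ψ₂ⱼ(y)·d ≤ ∇ψ₁ᵢ'(y)·d`. Both `ψ₁ᵢ` and
`ψ₁ᵢ'` attain the first max at `x` and at `y`, so they increase equally from `x` to `y`, and the
gradient inequalities of concave and strictly convex functions give
`∇ψ₂ⱼ(y)·d ≤ ∇ψ₁ᵢ'(y)·d ≤ ψ₁ᵢ'(y) - ψ₁ᵢ'(x) = ψ₁ᵢ(y) - ψ₁ᵢ(x) ≤ ∇ψ₁ᵢ(x)·d ≤ ∇ψ₂ⱼ(x)·d < ∇ψ₂ⱼ(y)·d`.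
-/

noncomputable def quadFun {ι : Type*} [Fintype ι] (Q : Matrix ι ι ℝ) (q : ι → ℝ) (α : ℝ)
    (x : ι → ℝ) : ℝ :=
  1 / 2 * (x ⬝ᵥ Q *ᵥ x) + q ⬝ᵥ x + α

section Quadratic

variable {ι : Type*} [Fintype ι] {Q : Matrix ι ι ℝ} {q : ι → ℝ} {α : ℝ}

lemma quadFun_add_smul (hQ : Q.IsSymm) (x v : ι → ℝ) (δ : ℝ) :
    quadFun Q q α (x + δ • v) =
      quadFun Q q α x + δ * ((Q *ᵥ x + q) ⬝ᵥ v) + δ ^ 2 * (1 / 2 * (v ⬝ᵥ Q *ᵥ v)) := by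
  have hxv : x ⬝ᵥ Q *ᵥ v = (Q *ᵥ x) ⬝ᵥ v := by
    rw [dotProduct_mulVec, ← mulVec_transpose, hQ.eq]
  have hvx : v ⬝ᵥ Q *ᵥ x = (Q *ᵥ x) ⬝ᵥ v := dotProduct_comm _ _
  simp only [quadFun, mulVec_add, mulVec_smul, dotProduct_add, add_dotProduct, dotProduct_smul,
    smul_dotProduct, smul_eq_mul, hxv, hvx]
  ring

lemma quadFun_sub_le_of_posSemidef_neg (hQ : (-Q).PosSemidef) (x y : ι → ℝ) :
    quadFun Q q α y - quadFun Q q α x ≤ (Q *ᵥ x + q) ⬝ᵥ (y - x) := by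
  have hsymm : Q.IsSymm := by simpa using hQ.isHermitian.neg
  have hexp := quadFun_add_smul (q := q) (α := α) hsymm x (y - x) 1
  have hcurv := hQ.dotProduct_mulVec_nonneg (y - x)
  rw [one_smul, add_sub_cancel] at hexp
  simp only [star_trivial, neg_mulVec, dotProduct_neg] at hcurv
  linarith

lemma le_quadFun_sub_of_posSemidef_neg (hQ : (-Q).PosSemidef) (x y : ι → ℝ) :
    (Q *ᵥ y + q) ⬝ᵥ (y - x) ≤ quadFun Q q α y - quadFun Q q α x := by
  have := quadFun_sub_le_of_posSemidef_neg (q := q) (α := α) hQ y x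
  rw [← neg_sub y x, dotProduct_neg] at this
  linarith

lemma lt_quadFun_sub_of_posDef (hQ : Q.PosDef) {x y : ι → ℝ} (hxy : x ≠ y) :
    (Q *ᵥ x + q) ⬝ᵥ (y - x) < quadFun Q q α y - quadFun Q q α x := by
  have hsymm : Q.IsSymm := by simpa using hQ.isHermitian
  have hexp := quadFun_add_smul (q := q) (α := α) hsymm x (y - x) 1
  have hcurv := hQ.dotProduct_mulVec_pos (sub_ne_zero.mpr hxy.symm)
  rw [one_smul, add_sub_cancel] at hexp
  rw [star_trivial] at hcurv
  linarith

lemma quadFun_sub_lt_of_posDef (hQ : Q.PosDef) {x y : ι → ℝ} (hxy : x ≠ y) :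
    quadFun Q q α y - quadFun Q q α x < (Q *ᵥ y + q) ⬝ᵥ (y - x) := by
  have := lt_quadFun_sub_of_posDef (q := q) (α := α) hQ hxy.symm
  rw [← neg_sub y x, dotProduct_neg] at this
  linarith

end Quadratic

noncomputable def maxIndices {k : ℕ} (g : Fin k → ℝ) : Finset (Fin k) :=
  Finset.univ.filter fun i => ∀ j, g j ≤ g i

section MaxIndices

variable {k : ℕ} {g : Fin k → ℝ} {i : Fin k}

lemma mem_maxIndices : i ∈ maxIndices g ↔ ∀ j, g j ≤ g i := by
  simp [maxIndices]

lemma maxIndices_nonempty (hk : 0 < k) (g : Fin k → ℝ) : (maxIndices g).Nonempty := by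
  have : Nonempty (Fin k) := ⟨⟨0, hk⟩⟩
  obtain ⟨i, hi⟩ := Finite.exists_max g
  exact ⟨i, mem_maxIndices.2 hi⟩

lemma finMax_eq_of_mem_maxIndices (hk : 0 < k) (hi : i ∈ maxIndices g) : finMax hk g = g i :=
  le_antisymm (Finset.sup'_le _ _ fun j _ => mem_maxIndices.1 hi j)
    (Finset.le_sup' g (Finset.mem_univ i))

lemma finMax_eq_sup' (hk : 0 < k) {s : Finset (Fin k)} (hs : s.Nonempty)
    (hg : ∀ j ∉ s, ∃ i ∈ s, g j ≤ g i) : finMax hk g = s.sup' hs g := by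
  refine le_antisymm (Finset.sup'_le _ _ fun j _ => ?_)
    (Finset.sup'_le _ _ fun j _ => Finset.le_sup' g (Finset.mem_univ j))
  by_cases hj : j ∈ s
  · exact Finset.le_sup' g hj
  · obtain ⟨i, hi, hji⟩ := hg j hj
    exact hji.trans (Finset.le_sup' g hi)

end MaxIndices

section DirDeriv

variable {n : ℕ} {x v : Fin n → ℝ}

lemma HasDirDeriv.sub {f g : (Fin n → ℝ) → ℝ} {L M : ℝ} (hf : HasDirDeriv f x v L)
    (hg : HasDirDeriv g x v M) : HasDirDeriv (fun y => f y - g y) x v (L - M) :=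
  (Tendsto.sub hf hg).congr fun δ => by ring

lemma HasDirDeriv.tendsto_along {f : (Fin n → ℝ) → ℝ} {L : ℝ} (h : HasDirDeriv f x v L) :
    Tendsto (fun δ : ℝ => f (x + δ • v)) (𝓝[>] 0) (𝓝 (f x)) := by
  have hlim : Tendsto (fun δ : ℝ => f x + δ * ((f (x + δ • v) - f x) / δ)) (𝓝[>] 0)
      (𝓝 (f x + 0 * L)) :=
    tendsto_const_nhds.add ((tendsto_nhdsWithin_of_tendsto_nhds tendsto_id).mul h)
  rw [zero_mul, add_zero] at hlim
  refine hlim.congr' ?_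
  filter_upwards [self_mem_nhdsWithin] with δ (hδ : 0 < δ)
  field_simp
  ring

lemma hasDirDeriv_quadFun {Q : Matrix (Fin n) (Fin n) ℝ} (hQ : Q.IsSymm) (q : Fin n → ℝ) (α : ℝ)
    (x v : Fin n → ℝ) : HasDirDeriv (quadFun Q q α) x v ((Q *ᵥ x + q) ⬝ᵥ v) := by
  have hlim : Tendsto (fun δ : ℝ => (Q *ᵥ x + q) ⬝ᵥ v + δ * (1 / 2 * (v ⬝ᵥ Q *ᵥ v)))
      (𝓝[>] 0) (𝓝 ((Q *ᵥ x + q) ⬝ᵥ v)) := by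
    have hcont : Continuous fun δ : ℝ => (Q *ᵥ x + q) ⬝ᵥ v + δ * (1 / 2 * (v ⬝ᵥ Q *ᵥ v)) := by
      fun_prop
    simpa using (hcont.tendsto 0).mono_left nhdsWithin_le_nhds
  refine hlim.congr' ?_
  filter_upwards [self_mem_nhdsWithin] with δ (hδ : 0 < δ)
  rw [quadFun_add_smul hQ]
  field_simp
  ring

lemma HasDirDeriv.finMax {k : ℕ} (hk : 0 < k) {f : Fin k → (Fin n → ℝ) → ℝ} {L : Fin k → ℝ}
    (hf : ∀ i, HasDirDeriv (f i) x v (L i)) :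
    HasDirDeriv (fun y => finMax hk fun i => f i y) x v
      ((maxIndices fun i => f i x).sup' (maxIndices_nonempty hk _) L) := by
  set s := maxIndices fun i => f i x
  obtain ⟨i₀, hi₀⟩ := maxIndices_nonempty hk fun i => f i x
  have hbelow : ∀ᶠ δ in 𝓝[>] (0 : ℝ), ∀ j ∉ s, f j (x + δ • v) < f i₀ (x + δ • v) := by
    refine eventually_all.2 fun j => ?_
    by_cases hj : j ∈ s
    · exact .of_forall fun _ hj' => absurd hj hj'
    have hlt : f j x < f i₀ x := by
      obtain ⟨j', hj'⟩ : ∃ j', f j x < f j' x := by simpa [s, mem_maxIndices] using hj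
      exact hj'.trans_le (mem_maxIndices.1 hi₀ j')
    exact ((hf j).tendsto_along.eventually_lt (hf i₀).tendsto_along hlt).mono fun _ hδ _ => hδ
  refine (Tendsto.finset_sup'_nhds_apply _ fun i _ => hf i).congr' ?_
  filter_upwards [hbelow, self_mem_nhdsWithin] with δ hδ (hδpos : 0 < δ)
  have hmono : Monotone fun t : ℝ => (t - f i₀ x) / δ := fun a b hab =>
    div_le_div_of_nonneg_right (sub_le_sub_right hab _) hδpos.le
  rw [finMax_eq_sup' hk (maxIndices_nonempty hk _) fun j hj => ⟨i₀, hi₀, (hδ j hj).le⟩,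
    finMax_eq_of_mem_maxIndices hk hi₀,
    Finset.apply_sup'_eq_sup'_comp _ (fun t => (t - f i₀ x) / δ) fun a b => hmono.map_max]
  refine Finset.sup'_congr _ rfl fun i hi => ?_
  rw [Function.comp_apply, le_antisymm (mem_maxIndices.1 hi₀ i) (mem_maxIndices.1 hi i₀)]

end DirDeriv

lemma DStat.exists_mem_maxIndices_le {n k₁ k₂ : ℕ} (hk₁ : 0 < k₁) (hk₂ : 0 < k₂)
    {f : Fin k₁ → (Fin n → ℝ) → ℝ} {g : Fin k₂ → (Fin n → ℝ) → ℝ} {X : Set (Fin n → ℝ)}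
    {x₀ z : Fin n → ℝ}
    (hst : DStat (fun x => finMax hk₁ (fun i => f i x) - finMax hk₂ (fun j => g j x)) X x₀)
    (hz : z ∈ X) {Lf : Fin k₁ → ℝ} {Lg : Fin k₂ → ℝ}
    (hf : ∀ i, HasDirDeriv (f i) x₀ (z - x₀) (Lf i)) (hg : ∀ j, HasDirDeriv (g j) x₀ (z - x₀) (Lg j))
    {j : Fin k₂} (hj : j ∈ maxIndices fun j => g j x₀) :
    ∃ i ∈ maxIndices (fun i => f i x₀), Lg j ≤ Lf i := by
  obtain ⟨L, hL, hL0⟩ := hst.2 z hz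
  have hD := (HasDirDeriv.finMax hk₁ hf).sub (HasDirDeriv.finMax hk₂ hg)
  have hLeq := tendsto_nhds_unique hL hD
  have hle : Lg j ≤ (maxIndices fun i => f i x₀).sup' (maxIndices_nonempty hk₁ _) Lf := by
    have := Finset.le_sup' Lg hj
    linarith
  exact (Finset.le_sup'_iff _).1 hle

lemma eventually_mem_polyhedron_of_tight_iff {ι m : Type*} [Fintype ι] [Finite m]
    {A : m → ι → ℝ} {b : m → ℝ} {x y : ι → ℝ}
    (hx : ∀ l, A l ⬝ᵥ x ≤ b l) (hy : ∀ l, A l ⬝ᵥ y ≤ b l)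
    (htight : ∀ l, A l ⬝ᵥ x = b l ↔ A l ⬝ᵥ y = b l) :
    ∀ᶠ ε in 𝓝 (0 : ℝ),
      (∀ l, A l ⬝ᵥ (x - ε • (y - x)) ≤ b l) ∧ ∀ l, A l ⬝ᵥ (y + ε • (y - x)) ≤ b l := by
  simp only [eventually_and, eventually_all, dotProduct_sub, dotProduct_add, dotProduct_smul,
    smul_eq_mul]
  refine ⟨fun l => ?_, fun l => ?_⟩ <;> by_cases hl : A l ⬝ᵥ x = b l
  · have hl' := (htight l).1 hl
    exact .of_forall fun ε => by rw [hl, hl']; simp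
  · have hlt : A l ⬝ᵥ x < b l := (hx l).lt_of_ne hl
    have hcont : Continuous fun ε : ℝ => A l ⬝ᵥ x - ε * (A l ⬝ᵥ y - A l ⬝ᵥ x) := by fun_prop
    exact (hcont.tendsto 0).eventually (gt_mem_nhds (by simpa using hlt)) |>.mono fun _ h => h.le
  · have hl' := (htight l).1 hl
    exact .of_forall fun ε => by rw [hl, hl']; simp
  · have hlt : A l ⬝ᵥ y < b l := (hy l).lt_of_ne (mt (htight l).2 hl)
    have hcont : Continuous fun ε : ℝ => A l ⬝ᵥ y + ε * (A l ⬝ᵥ y - A l ⬝ᵥ x) := by fun_prop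
    exact (hcont.tendsto 0).eventually (gt_mem_nhds (by simpa using hlt)) |>.mono fun _ h => h.le

theorem eq_of_dStat_of_maxIndices_eq {n k₁ k₂ m : ℕ} (hk₁ : 0 < k₁) (hk₂ : 0 < k₂)
    {A : Fin m → Fin n → ℝ} {b : Fin m → ℝ}
    {Q₁ : Fin k₁ → Matrix (Fin n) (Fin n) ℝ} {q₁ : Fin k₁ → Fin n → ℝ} {α₁ : Fin k₁ → ℝ}
    (hQ₁ : ∀ i, (-(Q₁ i)).PosSemidef)
    {Q₂ : Fin k₂ → Matrix (Fin n) (Fin n) ℝ} {q₂ : Fin k₂ → Fin n → ℝ} {α₂ : Fin k₂ → ℝ}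
    (hQ₂ : ∀ j, (Q₂ j).PosDef) {x y : Fin n → ℝ}
    (hx : DStat (fun x => finMax hk₁ (fun i => quadFun (Q₁ i) (q₁ i) (α₁ i) x) -
      finMax hk₂ (fun j => quadFun (Q₂ j) (q₂ j) (α₂ j) x)) {x | ∀ l, A l ⬝ᵥ x ≤ b l} x)
    (hy : DStat (fun x => finMax hk₁ (fun i => quadFun (Q₁ i) (q₁ i) (α₁ i) x) -
      finMax hk₂ (fun j => quadFun (Q₂ j) (q₂ j) (α₂ j) x)) {x | ∀ l, A l ⬝ᵥ x ≤ b l} y)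
    (h₁ : (maxIndices fun i => quadFun (Q₁ i) (q₁ i) (α₁ i) x) =
      maxIndices fun i => quadFun (Q₁ i) (q₁ i) (α₁ i) y)
    (h₂ : (maxIndices fun j => quadFun (Q₂ j) (q₂ j) (α₂ j) x) =
      maxIndices fun j => quadFun (Q₂ j) (q₂ j) (α₂ j) y)
    (htight : ∀ l, A l ⬝ᵥ x = b l ↔ A l ⬝ᵥ y = b l) :
    x = y := by
  by_contra hxy
  have hsymm₁ (i : Fin k₁) : (Q₁ i).IsSymm := by simpa using (hQ₁ i).isHermitian.neg
  have hsymm₂ (j : Fin k₂) : (Q₂ j).IsSymm := by simpa using (hQ₂ j).isHermitian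
  have hfeasible : ∀ᶠ ε in 𝓝[>] (0 : ℝ),
      x - ε • (y - x) ∈ {x | ∀ l, A l ⬝ᵥ x ≤ b l} ∧ y + ε • (y - x) ∈ {x | ∀ l, A l ⬝ᵥ x ≤ b l} :=
    (eventually_mem_polyhedron_of_tight_iff hx.1 hy.1 htight).filter_mono nhdsWithin_le_nhds
  obtain ⟨ε, ⟨hxε, hyε⟩, hε⟩ := (hfeasible.and self_mem_nhdsWithin).exists
  obtain ⟨j, hj⟩ := maxIndices_nonempty hk₂ fun j => quadFun (Q₂ j) (q₂ j) (α₂ j) x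
  obtain ⟨i, hi, hix⟩ := hx.exists_mem_maxIndices_le hk₁ hk₂ (z := x - ε • (y - x)) hxε
    (fun i => hasDirDeriv_quadFun (hsymm₁ i) _ _ _ _)
    (fun j => hasDirDeriv_quadFun (hsymm₂ j) _ _ _ _) hj
  obtain ⟨i', hi', hiy⟩ := hy.exists_mem_maxIndices_le hk₁ hk₂ (z := y + ε • (y - x)) hyε
    (fun i => hasDirDeriv_quadFun (hsymm₁ i) _ _ _ _)
    (fun j => hasDirDeriv_quadFun (hsymm₂ j) _ _ _ _) (h₂ ▸ hj)
  have hx' : (Q₁ i *ᵥ x + q₁ i) ⬝ᵥ (y - x) ≤ (Q₂ j *ᵥ x + q₂ j) ⬝ᵥ (y - x) := by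
    simp only [sub_sub_cancel_left, dotProduct_neg, dotProduct_smul, smul_eq_mul,
      neg_le_neg_iff] at hix
    exact le_of_mul_le_mul_left hix hε
  have hy' : (Q₂ j *ᵥ y + q₂ j) ⬝ᵥ (y - x) ≤ (Q₁ i' *ᵥ y + q₁ i') ⬝ᵥ (y - x) := by
    simp only [add_sub_cancel_left, dotProduct_smul, smul_eq_mul] at hiy
    exact le_of_mul_le_mul_left hiy hε
  have hfx : quadFun (Q₁ i) (q₁ i) (α₁ i) x = quadFun (Q₁ i') (q₁ i') (α₁ i') x :=
    le_antisymm (mem_maxIndices.1 (h₁ ▸ hi') i) (mem_maxIndices.1 hi i')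
  have hfy : quadFun (Q₁ i) (q₁ i) (α₁ i) y = quadFun (Q₁ i') (q₁ i') (α₁ i') y :=
    le_antisymm (mem_maxIndices.1 hi' i) (mem_maxIndices.1 (h₁ ▸ hi) i')
  refine lt_irrefl ((Q₂ j *ᵥ y + q₂ j) ⬝ᵥ (y - x)) ?_
  calc (Q₂ j *ᵥ y + q₂ j) ⬝ᵥ (y - x)
      ≤ (Q₁ i' *ᵥ y + q₁ i') ⬝ᵥ (y - x) := hy'
    _ ≤ quadFun (Q₁ i') (q₁ i') (α₁ i') y - quadFun (Q₁ i') (q₁ i') (α₁ i') x :=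
      le_quadFun_sub_of_posSemidef_neg (hQ₁ i') x y
    _ = quadFun (Q₁ i) (q₁ i) (α₁ i) y - quadFun (Q₁ i) (q₁ i) (α₁ i) x := by rw [hfx, hfy]
    _ ≤ (Q₁ i *ᵥ x + q₁ i) ⬝ᵥ (y - x) := quadFun_sub_le_of_posSemidef_neg (hQ₁ i) x y
    _ ≤ (Q₂ j *ᵥ x + q₂ j) ⬝ᵥ (y - x) := hx'
    _ < quadFun (Q₂ j) (q₂ j) (α₂ j) y - quadFun (Q₂ j) (q₂ j) (α₂ j) x :=
      lt_quadFun_sub_of_posDef (hQ₂ j) hxy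
    _ < (Q₂ j *ᵥ y + q₂ j) ⬝ᵥ (y - x) := quadFun_sub_lt_of_posDef (hQ₂ j) hxy

theorem stmt_13_general {n k₁ k₂ : ℕ} (hk₁ : 0 < k₁) (hk₂ : 0 < k₂)
    (X : Set (Fin n → ℝ)) (hX : IsPolyhedral X)
    (Q₁ : Fin k₁ → Matrix (Fin n) (Fin n) ℝ) (q₁ : Fin k₁ → Fin n → ℝ) (α₁ : Fin k₁ → ℝ)
    (hQ₁ : ∀ i, (-(Q₁ i)).PosSemidef)
    (Q₂ : Fin k₂ → Matrix (Fin n) (Fin n) ℝ) (q₂ : Fin k₂ → Fin n → ℝ) (α₂ : Fin k₂ → ℝ)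
    (hQ₂ : ∀ j, (Q₂ j).PosDef)
    (ψ₁ : Fin k₁ → (Fin n → ℝ) → ℝ)
    (hψ₁ : ∀ i x, ψ₁ i x = (1/2) * (x ⬝ᵥ (Q₁ i).mulVec x) + q₁ i ⬝ᵥ x + α₁ i)
    (ψ₂ : Fin k₂ → (Fin n → ℝ) → ℝ)
    (hψ₂ : ∀ j x, ψ₂ j x = (1/2) * (x ⬝ᵥ (Q₂ j).mulVec x) + q₂ j ⬝ᵥ x + α₂ j)
    (ψ : (Fin n → ℝ) → ℝ)
    (hψ : ∀ x, ψ x = finMax hk₁ (fun i => ψ₁ i x) - finMax hk₂ (fun j => ψ₂ j x)) :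
    {x | DStat ψ X x}.Finite := by
  obtain ⟨m, A, b, rfl⟩ := hX
  obtain rfl : ψ₁ = fun i => quadFun (Q₁ i) (q₁ i) (α₁ i) := funext fun i => funext (hψ₁ i)
  obtain rfl : ψ₂ = fun j => quadFun (Q₂ j) (q₂ j) (α₂ j) := funext fun j => funext (hψ₂ j)
  obtain rfl := funext hψ
  refine Set.Finite.of_finite_image (Set.toFinite _)
    (f := fun x => ((maxIndices fun i => quadFun (Q₁ i) (q₁ i) (α₁ i) x),
      (maxIndices fun j => quadFun (Q₂ j) (q₂ j) (α₂ j) x), {l | A l ⬝ᵥ x = b l})) ?_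
  intro x hx y hy hxy
  simp only [Prod.mk.injEq, Set.ext_iff, Set.mem_ofPred_eq] at hxy
  exact eq_of_dStat_of_maxIndices_eq hk₁ hk₂ hQ₁ hQ₂ hx hy hxy.1 hxy.2.1 hxy.2.2

/-- Proposition 9(b): for `ψ = max_i ψ₁ᵢ - max_j ψ₂ⱼ` with the `ψ₁ᵢ` concave quadratic,
the `ψ₂ⱼ` strictly convex quadratic, and the gradients of the active pieces of the first
max linearly independent at every d-stationary point, the set `D_{(ψ,X)}` of d-stationary
points of `ψ` on a polyhedral set `X` is finite. -/
theorem stmt_13 {n k₁ k₂ : ℕ} (hk₁ : 0 < k₁) (hk₂ : 0 < k₂)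
    (X : Set (Fin n → ℝ)) (hX : IsPolyhedral X)
    (Q₁ : Fin k₁ → Matrix (Fin n) (Fin n) ℝ) (q₁ : Fin k₁ → Fin n → ℝ) (α₁ : Fin k₁ → ℝ)
    (hQ₁ : ∀ i, (-(Q₁ i)).PosSemidef)
    (Q₂ : Fin k₂ → Matrix (Fin n) (Fin n) ℝ) (q₂ : Fin k₂ → Fin n → ℝ) (α₂ : Fin k₂ → ℝ)
    (hQ₂ : ∀ j, (Q₂ j).PosDef)
    (ψ₁ : Fin k₁ → (Fin n → ℝ) → ℝ)
    (hψ₁ : ∀ i x, ψ₁ i x = (1/2) * (x ⬝ᵥ (Q₁ i).mulVec x) + q₁ i ⬝ᵥ x + α₁ i)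
    (ψ₂ : Fin k₂ → (Fin n → ℝ) → ℝ)
    (hψ₂ : ∀ j x, ψ₂ j x = (1/2) * (x ⬝ᵥ (Q₂ j).mulVec x) + q₂ j ⬝ᵥ x + α₂ j)
    (ψ : (Fin n → ℝ) → ℝ)
    (hψ : ∀ x, ψ x = finMax hk₁ (fun i => ψ₁ i x) - finMax hk₂ (fun j => ψ₂ j x))
    (hLI : ∀ x₀, DStat ψ X x₀ →
      LinearIndependent ℝ
        (fun i : {i : Fin k₁ // ∀ j, ψ₁ j x₀ ≤ ψ₁ i x₀} =>
          (Q₁ i.1).mulVec x₀ + q₁ i.1)) :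
    {x | DStat ψ X x}.Finite :=
  stmt_13_general hk₁ hk₂ X hX Q₁ q₁ α₁ hQ₁ Q₂ q₂ α₂ hQ₂ ψ₁ hψ₁ ψ₂ hψ₂ ψ hψ
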